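/- Under a product probability, the range C(I) of the cluster operator C_I equals the linear span of products ∏_{i∈I} g_i where each g_i depends only on site i and has zero expectation, and the full function space decomposes as the orthogonal direct sum F = ⊕_I C(I) over all subsets I of sites. -/

import Mathlib

/-- `Depends f I` : the configuration function `f` depends only on the sites in `I`. -/
def Depends {S : Type*} {Sps : S → Type*} (f : (∀ i, Sps i) → ℂ) (I : Finset S) : Prop :=
  ∀ x y : ∀ i, Sps i, (∀ i ∈ I, x i = y i) → f x = f y

/-!
Write `∏_J g` for `x ↦ ∏ i ∈ J, g i (x i)` with every `g i` of mean zero under `p i`.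
Resampling the spins outside `A` is self-adjoint for the product weight, fixes the functions
of the spins in `A`, and kills `∏_J g` when `J ⊄ A`, since the factor at a site of `J \ A`
averages out. So functions of the spins in `A` are orthogonal to `∏_J g`, and the self-adjoint
projection `E A` fixes `∏_J g` if `J ⊆ A` and kills it otherwise. Möbius inversion of
`E I = ∑_{J ⊆ I} C J` then shows that `C I` fixes `∏_J g` if `J = I` and kills it otherwise.
Splitting each one-site factor into its mean plus a centred part writes every product function,
and hence every function, as a combination of such `∏_J g`; this identifies the range of `C I`,
gives the orthogonality, and `E univ = id` gives the decomposition.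
-/

open Finset

theorem Finset.eq_of_forall_sum_powerset_eq {α M : Type*} [DecidableEq α] [AddCancelCommMonoid M]
    {c c' : Finset α → M} (h : ∀ s : Finset α, ∑ t ∈ s.powerset, c t = ∑ t ∈ s.powerset, c' t)
    (s : Finset α) : c s = c' s := by
  induction s using Finset.strongInduction with
  | H s ih =>
    have hsub : ∑ t ∈ s.powerset.erase s, c t = ∑ t ∈ s.powerset.erase s, c' t :=
      sum_congr rfl fun t ht => by
        rw [mem_erase, mem_powerset] at ht
        exact ih t (ht.2.ssubset_of_ne ht.1)
    have hs := h s
    rwa [← sum_erase_add _ _ (mem_powerset_self s), ← sum_erase_add _ _ (mem_powerset_self s),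
      hsub, add_right_inj] at hs

theorem apply_eq_ite_of_sum_powerset {S R M : Type*} [DecidableEq S] [Semiring R]
    [AddCancelCommMonoid M] [Module R M] {E C : Finset S → M →ₗ[R] M}
    (hEC : ∀ I, E I = ∑ J ∈ I.powerset, C J) {K : Finset S} {h : M}
    (hE : ∀ A, E A h = if K ⊆ A then h else 0) (I : Finset S) :
    C I h = if I = K then h else 0 :=
  eq_of_forall_sum_powerset_eq (c := fun J => C J h) (c' := fun J => if J = K then h else 0)
    (fun A => by simp only [← LinearMap.sum_apply, ← hEC, hE A, sum_ite_eq', mem_powerset]) I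

namespace ProductWeight

variable {S : Type*} {Sps : S → Type*}

lemma depends_prod {J A : Finset S} (g : ∀ i, Sps i → ℂ) (hJA : J ⊆ A) :
    Depends (fun x => ∏ i ∈ J, g i (x i)) A :=
  fun x y hxy => prod_congr rfl fun i hi => by rw [hxy i (hJA hi)]

lemma span_prod_eq_top [Fintype S] [∀ i, Finite (Sps i)] :
    Submodule.span ℂ {f : (∀ i, Sps i) → ℂ | ∃ g : ∀ i, Sps i → ℂ, f = fun x => ∏ i, g i (x i)}
      = ⊤ := by
  classical
  refine eq_top_iff.mpr ((Pi.basisFun ℂ _).span_eq.ge.trans (Submodule.span_mono ?_))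
  rintro _ ⟨a, rfl⟩
  refine ⟨fun i => Pi.single (a i) 1, funext fun x => ?_⟩
  simp [Pi.single_apply, prod_boole, funext_iff]

section Centered

variable [∀ i, Fintype (Sps i)] (p : ∀ i, Sps i → ℝ)

def siteMean (i : S) (φ : Sps i → ℂ) : ℂ := ∑ s, (p i s : ℂ) * φ s

def IsCentered (J : Finset S) (g : ∀ i, Sps i → ℂ) : Prop := ∀ i ∈ J, siteMean p i (g i) = 0

def centeredProducts (I : Finset S) : Set ((∀ i, Sps i) → ℂ) :=
  {f | ∃ g : ∀ i, Sps i → ℂ, IsCentered p I g ∧ f = fun x => ∏ i ∈ I, g i (x i)}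

lemma isCentered_sub_siteMean (hsum : ∀ i, ∑ s, p i s = 1) (J : Finset S)
    (g : ∀ i, Sps i → ℂ) : IsCentered p J fun i s => g i s - siteMean p i (g i) := fun i _ => by
  simp only [siteMean, mul_sub, sum_sub_distrib, ← sum_mul, ← Complex.ofReal_sum, hsum,
    Complex.ofReal_one, one_mul, sub_self]

end Centered

variable [Fintype S] (p : ∀ i, Sps i → ℝ)

def weight (x : ∀ i, Sps i) : ℂ := ∏ i, (p i (x i) : ℂ)

lemma conj_weight (x : ∀ i, Sps i) : starRingEnd ℂ (weight p x) = weight p x := by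
  simp [weight, map_prod]

variable [DecidableEq S]

lemma weight_piecewise_mul_weight_piecewise (A : Finset S) (x y : ∀ i, Sps i) :
    weight p (A.piecewise x y) * weight p (A.piecewise y x) = weight p x * weight p y := by
  simp only [weight, ← prod_mul_distrib]
  refine prod_congr rfl fun i _ => ?_
  by_cases hi : i ∈ A <;> simp [hi, mul_comm]

variable [∀ i, Fintype (Sps i)]

lemma sum_weight (hsum : ∀ i, ∑ s, p i s = 1) : ∑ x : ∀ i, Sps i, weight p x = 1 := by
  simp only [weight, ← Fintype.prod_sum fun i s => (p i s : ℂ), ← Complex.ofReal_sum, hsum,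
    Complex.ofReal_one, prod_const_one]

noncomputable def wInner : ((∀ i, Sps i) → ℂ) →ₗ⋆[ℂ] ((∀ i, Sps i) → ℂ) →ₗ[ℂ] ℂ :=
  LinearMap.mk₂'ₛₗ (starRingEnd ℂ) (RingHom.id ℂ)
    (fun f g => ∑ x, weight p x * starRingEnd ℂ (f x) * g x)
    (fun f f' g => by simp only [Pi.add_apply, map_add, mul_add, add_mul, sum_add_distrib])
    (fun c f g => by
      simp only [Pi.smul_apply, smul_eq_mul, map_mul, mul_sum]
      exact sum_congr rfl fun _ _ => by ring)
    (fun f g g' => by simp only [Pi.add_apply, mul_add, sum_add_distrib])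
    (fun c f g => by
      simp only [Pi.smul_apply, smul_eq_mul, mul_sum, RingHom.id_apply]
      exact sum_congr rfl fun _ _ => by ring)

lemma wInner_apply (f g : (∀ i, Sps i) → ℂ) :
    wInner p f g = ∑ x, weight p x * starRingEnd ℂ (f x) * g x := rfl

lemma conj_wInner (f g : (∀ i, Sps i) → ℂ) : starRingEnd ℂ (wInner p f g) = wInner p g f := by
  simp only [wInner_apply, map_sum, map_mul, conj_weight, Complex.conj_conj]
  exact sum_congr rfl fun x _ => by ring

lemma eq_zero_of_wInner_self (hp : ∀ i s, 0 < p i s) {f : (∀ i, Sps i) → ℂ}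
    (hf : wInner p f f = 0) : f = 0 := by
  have hterm : ∀ x, weight p x * starRingEnd ℂ (f x) * f x
      = ((∏ i, p i (x i)) * Complex.normSq (f x) : ℝ) := fun x => by
    rw [mul_assoc, mul_comm (starRingEnd ℂ _), Complex.mul_conj]
    push_cast [weight]
    ring
  rw [wInner_apply, sum_congr rfl fun x _ => hterm x, ← Complex.ofReal_sum,
    Complex.ofReal_eq_zero, sum_eq_zero_iff_of_nonneg fun x _ =>
      mul_nonneg (prod_nonneg fun i _ => (hp i (x i)).le) (Complex.normSq_nonneg _)] at hf
  funext x
  have hx := hf x (mem_univ x)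
  rw [mul_eq_zero, or_iff_right (prod_pos fun i _ => hp i (x i)).ne'] at hx
  exact Complex.normSq_eq_zero.mp hx

lemma wInner_eq_zero_of_mem_span {s t : Set ((∀ i, Sps i) → ℂ)}
    (h : ∀ f ∈ s, ∀ g ∈ t, wInner p f g = 0) {f g : (∀ i, Sps i) → ℂ}
    (hf : f ∈ Submodule.span ℂ s) (hg : g ∈ Submodule.span ℂ t) : wInner p f g = 0 := by
  have hleft : ∀ f ∈ s, Submodule.span ℂ t ≤ LinearMap.ker (wInner p f) := fun f hf =>
    Submodule.span_le.mpr fun g hg => h f hf g hg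
  have hright : Submodule.span ℂ s ≤ LinearMap.ker ((wInner p).flip g) :=
    Submodule.span_le.mpr fun f hf => hleft f hf hg
  exact hright hf

noncomputable def condExpect (A : Finset S) (f : (∀ i, Sps i) → ℂ) : (∀ i, Sps i) → ℂ :=
  fun x => ∑ y, weight p y * f (A.piecewise x y)

lemma condExpect_of_depends (hsum : ∀ i, ∑ s, p i s = 1) {A : Finset S}
    {f : (∀ i, Sps i) → ℂ} (hf : Depends f A) : condExpect p A f = f := by
  funext x
  calc ∑ y, weight p y * f (A.piecewise x y) = ∑ y, weight p y * f x :=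
        sum_congr rfl fun y _ => by rw [hf _ x fun i hi => piecewise_eq_of_mem _ _ _ hi]
    _ = f x := by rw [← sum_mul, sum_weight p hsum, one_mul]

lemma wInner_condExpect (A : Finset S) (f g : (∀ i, Sps i) → ℂ) :
    wInner p (condExpect p A f) g = wInner p f (condExpect p A g) := by
  -- Both sides are sums over pairs `(x, y)`, matched by the involution `σ`.
  set σ : (∀ i, Sps i) × (∀ i, Sps i) → (∀ i, Sps i) × (∀ i, Sps i) :=
    fun z => (A.piecewise z.1 z.2, A.piecewise z.2 z.1)
  have hσ : Function.Involutive σ := fun z => by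
    simp only [σ, piecewise_idem_left, piecewise_idem_right, piecewise_same]
  simp only [wInner_apply, condExpect, map_sum, map_mul, conj_weight, sum_mul, mul_sum]
  rw [← Fintype.sum_prod_type', ← Fintype.sum_prod_type']
  refine Fintype.sum_equiv hσ.toPerm _ _ fun z => ?_
  have hw := weight_piecewise_mul_weight_piecewise p A z.1 z.2
  simp only [Function.Involutive.coe_toPerm, σ, piecewise_idem_left, piecewise_idem_right,
    piecewise_same]
  linear_combination (starRingEnd ℂ (f (A.piecewise z.1 z.2)) * g z.1) * hw.symm

lemma condExpect_prod_eq_zero {A J : Finset S} {g : ∀ i, Sps i → ℂ} (hg : IsCentered p J g)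
    (hJA : ¬ J ⊆ A) : condExpect p A (fun x => ∏ i ∈ J, g i (x i)) = 0 := by
  obtain ⟨i₀, hi₀J, hi₀A⟩ := not_subset.mp hJA
  funext x
  set h : ∀ i, Sps i → ℂ := fun i s => if i ∈ J then g i (if i ∈ A then x i else s) else 1
  have hfactor : ∀ y, weight p y * ∏ i ∈ J, g i (A.piecewise x y i) =
      ∏ i, (p i (y i) * h i (y i)) := fun y => by
    simp only [weight, prod_mul_distrib, h, Fintype.prod_ite_mem, Finset.piecewise]
  have hi₀ : ∑ s, (p i₀ s : ℂ) * h i₀ s = 0 := by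
    simpa [h, hi₀J, hi₀A, siteMean] using hg i₀ hi₀J
  simp only [condExpect, hfactor, Pi.zero_apply]
  rw [← Fintype.prod_sum fun i s => (p i s : ℂ) * h i s]
  exact prod_eq_zero (mem_univ i₀) hi₀

lemma wInner_prod_eq_zero_of_depends (hsum : ∀ i, ∑ s, p i s = 1) {A J : Finset S}
    {u : (∀ i, Sps i) → ℂ} (hu : Depends u A) {g : ∀ i, Sps i → ℂ} (hg : IsCentered p J g)
    (hJA : ¬ J ⊆ A) : wInner p u (fun x => ∏ i ∈ J, g i (x i)) = 0 := by
  rw [← condExpect_of_depends p hsum hu, wInner_condExpect, condExpect_prod_eq_zero p hg hJA,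
    map_zero]

lemma wInner_eq_zero_of_mem_centeredProducts (hsum : ∀ i, ∑ s, p i s = 1) {I J : Finset S}
    (hIJ : I ≠ J) {f g : (∀ i, Sps i) → ℂ} (hf : f ∈ centeredProducts p I)
    (hg : g ∈ centeredProducts p J) : wInner p f g = 0 := by
  obtain ⟨a, ha, rfl⟩ := hf
  obtain ⟨b, hb, rfl⟩ := hg
  by_cases hJI : J ⊆ I
  · have hIJ' : ¬ I ⊆ J := fun h => hIJ (subset_antisymm h hJI)
    rw [← conj_wInner, wInner_prod_eq_zero_of_depends p hsum (depends_prod b subset_rfl) ha hIJ',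
      map_zero]
  · exact wInner_prod_eq_zero_of_depends p hsum (depends_prod a subset_rfl) hb hJI

lemma apply_prod_of_isSelfAdjoint_projection (hp : ∀ i s, 0 < p i s)
    (hsum : ∀ i, ∑ s, p i s = 1) {A : Finset S} (P : ((∀ i, Sps i) → ℂ) →ₗ[ℂ] ((∀ i, Sps i) → ℂ))
    (hrange : ∀ f, Depends (P f) A) (hfix : ∀ f, Depends f A → P f = f)
    (hadj : ∀ f g, wInner p (P f) g = wInner p f (P g)) {J : Finset S} {g : ∀ i, Sps i → ℂ}
    (hg : IsCentered p J g) :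
    P (fun x => ∏ i ∈ J, g i (x i)) =
      if J ⊆ A then (fun x : ∀ i, Sps i => ∏ i ∈ J, g i (x i)) else 0 := by
  split_ifs with hJA
  · exact hfix _ (depends_prod g hJA)
  set h : (∀ i, Sps i) → ℂ := fun x => ∏ i ∈ J, g i (x i)
  have horth : wInner p (P h) h = 0 := wInner_prod_eq_zero_of_depends p hsum (hrange h) hg hJA
  refine eq_zero_of_wInner_self p hp ?_
  calc wInner p (P h) (P h) = wInner p h (P (P h)) := hadj h (P h)
    _ = starRingEnd ℂ (wInner p (P h) h) := by rw [hfix _ (hrange h), conj_wInner]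
    _ = 0 := by rw [horth, map_zero]

lemma prod_eq_sum_smul_prod_centered (g : ∀ i, Sps i → ℂ) :
    (fun x : ∀ i, Sps i => ∏ i, g i (x i)) = ∑ J : Finset S, (∏ i ∈ Jᶜ, siteMean p i (g i)) •
      fun x => ∏ i ∈ J, (g i (x i) - siteMean p i (g i)) := by
  funext x
  calc ∏ i, g i (x i) = ∏ i, ((g i (x i) - siteMean p i (g i)) + siteMean p i (g i)) := by
        simp only [sub_add_cancel]
    _ = _ := by
      rw [Fintype.prod_add, Finset.sum_apply]
      exact sum_congr rfl fun J _ => mul_comm _ _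

lemma range_eq_span_centeredProducts (hsum : ∀ i, ∑ s, p i s = 1) (I : Finset S)
    (C : ((∀ i, Sps i) → ℂ) →ₗ[ℂ] ((∀ i, Sps i) → ℂ))
    (hC : ∀ K g, IsCentered p K g → C (fun x => ∏ i ∈ K, g i (x i)) =
      if I = K then (fun x : ∀ i, Sps i => ∏ i ∈ K, g i (x i)) else 0) :
    LinearMap.range C = Submodule.span ℂ (centeredProducts p I) := by
  apply le_antisymm
  · rw [LinearMap.range_eq_map, ← span_prod_eq_top, Submodule.map_span_le]
    rintro _ ⟨g, rfl⟩
    rw [prod_eq_sum_smul_prod_centered p g, map_sum]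
    refine Submodule.sum_mem _ fun K _ => ?_
    rw [map_smul, hC K _ (isCentered_sub_siteMean p hsum K g)]
    split_ifs with hIK
    · subst hIK
      exact Submodule.smul_mem _ _
        (Submodule.subset_span ⟨_, isCentered_sub_siteMean p hsum I g, rfl⟩)
    · rw [smul_zero]
      exact Submodule.zero_mem _
  · rw [Submodule.span_le]
    rintro _ ⟨g, hg, rfl⟩
    exact ⟨_, by rw [hC I g hg, if_pos rfl]⟩

end ProductWeight

open ProductWeight in
theorem cluster_subspaces_span_and_orthogonal_decomposition
    {S : Type*} [Fintype S] [DecidableEq S]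
    {Sps : S → Type*} [∀ i, Fintype (Sps i)]
    (p : ∀ i, Sps i → ℝ) (hp : ∀ i s, 0 < p i s) (hsum : ∀ i, ∑ s, p i s = 1)
    (E : Finset S → (((∀ i, Sps i) → ℂ) →ₗ[ℂ] ((∀ i, Sps i) → ℂ)))
    (hrange : ∀ I f, Depends (E I f) I)
    (hfix : ∀ I f, Depends f I → E I f = f)
    (hadj : ∀ (I : Finset S) (f g : (∀ i, Sps i) → ℂ),
      ∑ x, (∏ i, (p i (x i) : ℂ)) * (starRingEnd ℂ) ((E I f) x) * g x
        = ∑ x, (∏ i, (p i (x i) : ℂ)) * (starRingEnd ℂ) (f x) * (E I g) x)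
    (C : Finset S → (((∀ i, Sps i) → ℂ) →ₗ[ℂ] ((∀ i, Sps i) → ℂ)))
    (hEC : ∀ I : Finset S, E I = ∑ J ∈ I.powerset, C J) :
    (∀ I : Finset S, LinearMap.range (C I) =
      Submodule.span ℂ { f : (∀ i, Sps i) → ℂ | ∃ g : ∀ i, Sps i → ℂ,
        (∀ i ∈ I, ∑ s, (p i s : ℂ) * g i s = 0) ∧
        f = fun x => ∏ i ∈ I, g i (x i) }) ∧
    (∀ I J : Finset S, I ≠ J →
      ∀ f ∈ LinearMap.range (C I), ∀ g ∈ LinearMap.range (C J),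
        ∑ x, (∏ i, (p i (x i) : ℂ)) * (starRingEnd ℂ) (f x) * g x = 0) ∧
    (⨆ I : Finset S, LinearMap.range (C I)) = ⊤ := by
  have hC : ∀ I K g, IsCentered p K g → C I (fun x => ∏ i ∈ K, g i (x i)) =
      if I = K then (fun x : ∀ i, Sps i => ∏ i ∈ K, g i (x i)) else 0 := fun I K g hg =>
    apply_eq_ite_of_sum_powerset hEC (fun A => apply_prod_of_isSelfAdjoint_projection p hp hsum
      (E A) (hrange A) (hfix A) (hadj A) hg) I
  have hrangeC : ∀ I, LinearMap.range (C I) = Submodule.span ℂ (centeredProducts p I) :=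
    fun I => range_eq_span_centeredProducts p hsum I (C I) (hC I)
  refine ⟨hrangeC, fun I J hIJ f hf g hg => ?_, eq_top_iff.mpr fun f _ => ?_⟩
  · rw [hrangeC] at hf hg
    exact wInner_eq_zero_of_mem_span p
      (fun _ ha _ hb => wInner_eq_zero_of_mem_centeredProducts p hsum hIJ ha hb) hf hg
  · have hf : f = ∑ J ∈ univ.powerset, C J f := by
      rw [← LinearMap.sum_apply, ← hEC, hfix univ f fun x y hxy => congrArg f (funext fun i =>
        hxy i (mem_univ i))]
    rw [hf]
    exact Submodule.sum_mem _ fun J _ => Submodule.mem_iSup_of_mem J (LinearMap.mem_range_self _ _)
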